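/- Let n ≥ 1, N = 2^n, let ℓ ≥ 3 be an integer, and set θ = 2π/2^ℓ. Then for all a, b ∈ F₂ⁿ, the transversal Z-rotation τ_{Iₙ}^{(ℓ)} satisfies τ_{Iₙ}^{(ℓ)} E(a,b) (τ_{Iₙ}^{(ℓ)})† = (cos θ)^{w_H(a)} · Σ_{y ⪯ a} (tan θ)^{w_H(y)} (−1)^{b·y} E(a, b ⊕ y), where the sum runs over all y ∈ F₂ⁿ with supp(y) ⊆ supp(a). -/
import Mathlib


open Matrix

noncomputable section

/-- The Hermitian Pauli matrix `E(a,b)` on `n` qubits. -/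
def PauliE {n : ℕ} (a b : Fin n → ZMod 2) :
    Matrix (Fin n → ZMod 2) (Fin n → ZMod 2) ℂ :=
  Matrix.of fun u v =>
    Complex.I ^ ((∑ i, (a i).val * (b i).val) % 4) *
      (-1 : ℂ) ^ (∑ i, (v i).val * (b i).val) *
      (if u = v + a then (1 : ℂ) else 0)

/-- Hamming weight of a binary vector. -/
def wHam {n : ℕ} (a : Fin n → ZMod 2) : ℕ := ∑ i, (a i).val

/-- Integer dot product of the 0/1 representatives of two binary vectors. -/
def dotN {n : ℕ} (a b : Fin n → ZMod 2) : ℕ := ∑ i, (a i).val * (b i).val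

/-- The transversal `Z`-rotation `τ_{Iₙ}^{(ℓ)}`: the diagonal matrix with `(v,v)`
entry `ξ_ℓ^{w_H(v)}`, where `ξ_ℓ = e^{2πi/2^ℓ}`. -/
def tauI (n ℓ : ℕ) : Matrix (Fin n → ZMod 2) (Fin n → ZMod 2) ℂ :=
  Matrix.diagonal fun v =>
    Complex.exp (2 * (Real.pi : ℂ) * Complex.I / 2 ^ ℓ) ^ wHam v

/-- Conjugation of a Pauli matrix by the transversal `Z`-rotation (`θ = 2π/2^ℓ`):
`τ_{Iₙ}^{(ℓ)} E(a,b) (τ_{Iₙ}^{(ℓ)})† =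
  (cos θ)^{w_H(a)} Σ_{y ⪯ a} (tan θ)^{w_H(y)} (−1)^{b·y} E(a, b ⊕ y)`. -/
theorem transversal_Zrot_conjugation (n : ℕ) (hn : 1 ≤ n) (ℓ : ℕ) (hℓ : 3 ≤ ℓ)
    (a b : Fin n → ZMod 2) :
    tauI n ℓ * PauliE a b * (tauI n ℓ)ᴴ =
      ((Real.cos (2 * Real.pi / 2 ^ ℓ) : ℂ) ^ wHam a) •
        ∑ y ∈ Finset.univ.filter (fun y : Fin n → ZMod 2 => ∀ i, a i = 0 → y i = 0),
          (((Real.tan (2 * Real.pi / 2 ^ ℓ) : ℂ)) ^ wHam y * (-1 : ℂ) ^ dotN b y) •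
            PauliE a (b + y) := by
  classical
  set θ : ℝ := 2 * Real.pi / 2 ^ ℓ with hθdef
  set c : ℝ := Real.cos θ with hcdef
  set s : ℝ := Real.sin θ with hsdef
  have h8 : (8:ℝ) ≤ 2 ^ ℓ := by
    calc (8:ℝ) = 2^3 := by norm_num
    _ ≤ 2^ℓ := by apply pow_le_pow_right₀ (by norm_num) hℓ
  have hθpos : 0 < θ := by
    rw [hθdef]; positivity
  have hθlt : θ < Real.pi / 2 := by
    rw [hθdef]
    have h1 : 2 * Real.pi / 2 ^ ℓ ≤ 2 * Real.pi / 8 :=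
      div_le_div_of_nonneg_left (by positivity) (by norm_num) h8
    nlinarith [Real.pi_pos]
  have hc : c ≠ 0 := ne_of_gt (Real.cos_pos_of_mem_Ioo ⟨by linarith, hθlt⟩)
  have hcC : (c:ℂ) ≠ 0 := by exact_mod_cast hc
  have htan : (Real.tan θ : ℂ) = (s:ℂ)/(c:ℂ) := by
    rw [Real.tan_eq_sin_div_cos, hsdef, hcdef]; push_cast; ring
  set E : ℂ := Complex.exp (2 * (Real.pi : ℂ) * Complex.I / 2 ^ ℓ) with hEdef
  have hE : E = (c:ℂ) + (s:ℂ) * Complex.I := by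
    rw [hEdef, show (2 * (Real.pi : ℂ) * Complex.I / 2 ^ ℓ) = (θ:ℂ) * Complex.I by
      rw [hθdef]; push_cast; ring]
    rw [Complex.exp_mul_I, hcdef, hsdef, Complex.ofReal_cos, Complex.ofReal_sin]
  have hE' : star E = (c:ℂ) - (s:ℂ) * Complex.I := by
    rw [hE]; simp [Complex.star_def, Complex.conj_ofReal]; ring
  have h1 : (s:ℂ)^2 + (c:ℂ)^2 = 1 := by
    norm_cast; exact Real.sin_sq_add_cos_sq θ
  have hEE : E * star E = 1 := by
    rw [hE', hE]; linear_combination h1 - (s:ℂ)^2 * Complex.I_sq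
  have I_pow_mod : ∀ x : ℕ, Complex.I ^ (x % 4) = Complex.I ^ x := fun x => by
    conv_rhs => rw [← Nat.div_add_mod x 4, pow_add, pow_mul, Complex.I_pow_four, one_pow, one_mul]
  set t : Fin n → Finset (ZMod 2) := fun i => if a i = 0 then {0} else Finset.univ with htdef
  have hfil : Finset.univ.filter (fun y : Fin n → ZMod 2 => ∀ i, a i = 0 → y i = 0)
      = Fintype.piFinset t := by
    ext y
    simp only [Finset.mem_filter, Finset.mem_univ, true_and, Fintype.mem_piFinset]
    apply forall_congr'
    intro i
    by_cases h : a i = 0 <;> simp [htdef, h]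
  ext u v
  simp only [tauI, Matrix.diagonal_conjTranspose, Matrix.diagonal_mul, Matrix.mul_diagonal,
    Matrix.smul_apply, Matrix.sum_apply, Matrix.of_apply, PauliE, Pi.star_apply, star_pow,
    smul_eq_mul]
  by_cases h : u = v + a
  · subst h
    simp only [if_pos rfl, mul_one]
    rw [hfil, Finset.mul_sum]
    set T : Fin n → ZMod 2 → ℂ := fun i j =>
      (c:ℂ) ^ (a i).val * ((s:ℂ)/(c:ℂ)) ^ (j.val) * (-1:ℂ) ^ ((b i).val * j.val) *
      Complex.I ^ ((a i).val * ((b i + j)).val) * (-1:ℂ) ^ ((v i).val * ((b i + j)).val)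
      with hTdef
    simp only [if_true, mul_one]
    have hz : ∀ x : ZMod 2, x = 0 ∨ x = 1 := by decide
    have e0 : (0:ZMod 2).val = 0 := rfl
    have e1 : (1:ZMod 2).val = 1 := rfl
    have hEE' : E * (starRingEnd ℂ) E = 1 := hEE
    have hE'' : (starRingEnd ℂ) E = (c:ℂ) - (s:ℂ) * Complex.I := hE'
    have huval : (Finset.univ : Finset (ZMod 2)) = {0, 1} := by decide
    trans (∑ y ∈ Fintype.piFinset t, ∏ i, T i (y i))
    · rw [← Finset.prod_univ_sum]
      have hkey : ∀ i : Fin n, (∑ j ∈ t i, T i j) =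
          E ^ ((v i + a i).val) * (Complex.I ^ ((a i).val * (b i).val) *
            (-1:ℂ) ^ ((v i).val * (b i).val)) * (star E) ^ ((v i).val) := by
        intro i
        rcases hz (a i) with ha | ha
        · rcases hz (v i) with hv | hv <;>
            simp [htdef, hTdef, ha, hv, e0, e1]
          · linear_combination (-(-1:ℂ) ^ ((b i).val)) * hEE'
        · have hsum : (∑ j ∈ t i, T i j) = T i 0 + T i 1 := by
            rw [htdef]
            simp only [ha]
            norm_num [huval, Finset.sum_pair (show (0:ZMod 2) ≠ 1 by decide)]
          rw [hsum]
          rcases hz (b i) with hb | hb <;> rcases hz (v i) with hv | hv <;>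
            simp [hTdef, ha, hb, hv, hE, hE', e0, e1, show ((1:ZMod 2)+1) = 0 from rfl] <;>
            field_simp <;> (try ring) <;> linear_combination (-(s:ℂ)) * Complex.I_sq
      rw [Finset.prod_congr rfl fun i _ => hkey i]
      rw [I_pow_mod]
      try simp only [Finset.prod_mul_distrib, Finset.prod_pow_eq_pow_sum, wHam, Pi.add_apply]
      try ring
    · refine Finset.sum_congr rfl fun y _ => ?_
      rw [hTdef]
      simp only [Finset.prod_mul_distrib, Finset.prod_pow_eq_pow_sum]
      rw [I_pow_mod, htan]
      simp only [wHam, dotN, Pi.add_apply]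
      ring
  · simp [h]

end
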